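/- Let μ ∈ ℝ, σ > 0 and β ≥ 0. Then ∫₀^∞ u₂(x) · f_{μ,σ}(x)^{1+β} dx = β(βσ² − β − 1) · L(β,μ,σ). -/

import Mathlib

open Real MeasureTheory Set

/-- The log-normal density with parameters `μ` and `σ`. -/
noncomputable def lognormalPdf (μ σ : ℝ) (x : ℝ) : ℝ :=
  if 0 < x then
    (1 / (x * σ * Real.sqrt (2 * Real.pi))) * Real.exp (-(Real.log x - μ) ^ 2 / (2 * σ ^ 2))
  else 0

/-- First component of the score function of the log-normal model. -/
noncomputable def scoreU1 (μ σ : ℝ) (x : ℝ) : ℝ := (Real.log x - μ) / σ ^ 2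

/-- Second component of the score function of the log-normal model. -/
noncomputable def scoreU2 (μ σ : ℝ) (x : ℝ) : ℝ := ((Real.log x - μ) ^ 2 - σ ^ 2) / σ ^ 3

/-- The common multiplicative factor `L(β, μ, σ)`. -/
noncomputable def Lfactor (β μ σ : ℝ) : ℝ :=
  Real.exp (-β * μ + β ^ 2 * σ ^ 2 / (2 * (1 + β))) /
    (σ ^ (1 + β) * (2 * Real.pi) ^ (β / 2) * (1 + β) ^ ((5 : ℝ) / 2))

/-!
Substitute `x = exp t`. Since `exp t * f (exp t)` is the normal density `φ` of `N(μ, σ²)` at `t`,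
the integrand becomes `u₂ (exp t) * exp (-β t) * φ t ^ (1 + β)`. A power `φ ^ (1 + β)` is a
multiple of the density of `N(μ, σ² / (1 + β))`, and the exponential tilt `exp (-β t)` moves its
mean to `μ - β σ² / (1 + β)`. The integral is therefore `σ (1 + β)² L / σ³` times
`𝔼[(T - μ)² - σ²]` for `T` with that normal law, which equals
`σ² / (1 + β) + (β σ² / (1 + β))² - σ² = β σ² (β σ² - β - 1) / (1 + β)²`.
-/

open ProbabilityTheory
open scoped NNReal

theorem integral_Ioi_zero_eq_integral_exp_smul_comp_exp {E : Type*} [NormedAddCommGroup E]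
    [NormedSpace ℝ E] (g : ℝ → E) :
    ∫ x in Ioi (0 : ℝ), g x = ∫ t, exp t • g (exp t) := by
  simpa [abs_of_pos (exp_pos _)] using integral_image_eq_integral_abs_deriv_smul
    MeasurableSet.univ (fun t _ => (hasDerivAt_exp t).hasDerivWithinAt) exp_injective.injOn g

namespace ProbabilityTheory

theorem integral_sub_sq_gaussianReal (m c : ℝ) (v : ℝ≥0) :
    ∫ x, (x - c) ^ 2 ∂gaussianReal m v = v + (m - c) ^ 2 := by
  have hL2 : MemLp (fun x => x) 2 (gaussianReal m v) := memLp_id_gaussianReal 2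
  have hmean : ∫ x, (x - c) ∂gaussianReal m v = m - c := by
    rw [integral_sub (hL2.integrable one_le_two) (integrable_const c),
      integral_id_gaussianReal, integral_const, probReal_univ, one_smul]
  have hvar := variance_eq_sub (X := fun x => x - c) (hL2.sub (memLp_const c))
  rw [variance_sub_const hL2.1, variance_fun_id_gaussianReal] at hvar
  simp only [Pi.pow_apply, hmean] at hvar
  linarith

theorem exp_mul_gaussianPDFReal (m b t : ℝ) (v : ℝ≥0) :
    exp (b * t) * gaussianPDFReal m v t =
      exp (b * m + b ^ 2 * v / 2) * gaussianPDFReal (m + b * v) v t := by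
  rcases eq_or_ne v 0 with rfl | hv
  · simp
  have hv' : (v : ℝ) ≠ 0 := by exact_mod_cast hv
  have hsquare : b * t + -(t - m) ^ 2 / (2 * v) =
      b * m + b ^ 2 * v / 2 + -(t - (m + b * v)) ^ 2 / (2 * v) := by
    field_simp
    ring
  simp only [gaussianPDFReal]
  rw [mul_left_comm, ← exp_add, mul_left_comm (exp _), ← exp_add, hsquare]

theorem gaussianPDFReal_rpow (m t : ℝ) (v : ℝ≥0) {p : ℝ} (hp : 0 < p) :
    gaussianPDFReal m v t ^ p =
      gaussianPDFReal m (v / p.toNNReal) t / (√(2 * π * v) ^ (p - 1) * √p) := by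
  rcases eq_or_ne v 0 with rfl | hv
  · simp [Real.zero_rpow hp.ne']
  have hs : 0 < √(2 * π * v) := by positivity
  simp only [gaussianPDFReal, NNReal.coe_div, Real.coe_toNNReal _ hp.le]
  rw [mul_rpow (by positivity) (exp_pos _).le, ← exp_mul, inv_rpow hs.le,
    show 2 * π * (v / p) = 2 * π * v / p by ring, sqrt_div' _ hp.le, rpow_sub hs, Real.rpow_one,
    show 2 * ((v : ℝ) / p) = 2 * v / p by ring, div_div_eq_mul_div]
  field_simp

end ProbabilityTheory

theorem lognormalPdf_exp (μ : ℝ) {σ : ℝ} (hσ : 0 < σ) (t : ℝ) :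
    lognormalPdf μ σ (exp t) = exp (-t) * gaussianPDFReal μ (σ ^ 2).toNNReal t := by
  rw [lognormalPdf, if_pos (exp_pos t), log_exp, gaussianPDFReal,
    Real.coe_toNNReal _ (sq_nonneg σ), show 2 * π * σ ^ 2 = σ ^ 2 * (2 * π) by ring,
    sqrt_mul (sq_nonneg σ), sqrt_sq hσ.le, exp_neg]
  field_simp

theorem exp_mul_lognormalPdf_exp_rpow (μ : ℝ) {σ β : ℝ} (hσ : 0 < σ) (hβ : 0 < 1 + β) (t : ℝ) :
    exp t * lognormalPdf μ σ (exp t) ^ (1 + β) =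
      exp (-β * μ + β ^ 2 * σ ^ 2 / (2 * (1 + β))) / (√(2 * π * σ ^ 2) ^ β * √(1 + β)) *
        gaussianPDFReal (μ - β * σ ^ 2 / (1 + β)) (σ ^ 2 / (1 + β)).toNNReal t := by
  set v := (σ ^ 2 / (1 + β)).toNNReal
  have hv : (v : ℝ) = σ ^ 2 / (1 + β) := Real.coe_toNNReal _ (by positivity)
  have htilt : exp (-β * t) * gaussianPDFReal μ v t =
      exp (-β * μ + β ^ 2 * σ ^ 2 / (2 * (1 + β))) *
        gaussianPDFReal (μ - β * σ ^ 2 / (1 + β)) v t := by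
    rw [exp_mul_gaussianPDFReal, hv]
    congr 3 <;> field_simp
  rw [lognormalPdf_exp μ hσ, mul_rpow (exp_pos _).le (gaussianPDFReal_nonneg _ _ _),
    gaussianPDFReal_rpow _ _ _ hβ, ← Real.toNNReal_div (sq_nonneg σ), ← exp_mul,
    Real.coe_toNNReal _ (sq_nonneg σ), add_sub_cancel_left, ← mul_assoc, ← exp_add,
    show t + -t * (1 + β) = -β * t by ring, mul_div_assoc', htilt]
  ring

theorem mul_Lfactor_eq (μ : ℝ) {σ β : ℝ} (hσ : 0 < σ) (hβ : 0 < 1 + β) :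
    σ * (1 + β) ^ 2 * Lfactor β μ σ =
      exp (-β * μ + β ^ 2 * σ ^ 2 / (2 * (1 + β))) / (√(2 * π * σ ^ 2) ^ β * √(1 + β)) := by
  have hsqrt : √(2 * π * σ ^ 2) ^ β = σ ^ β * (2 * π) ^ (β / 2) := by
    rw [show 2 * π * σ ^ 2 = σ ^ 2 * (2 * π) by ring, sqrt_mul (sq_nonneg σ), sqrt_sq hσ.le,
      mul_rpow hσ.le (by positivity), sqrt_eq_rpow, ← rpow_mul (by positivity)]
    ring_nf
  have hσβ : σ ^ (1 + β) = σ * σ ^ β := by rw [rpow_add hσ, Real.rpow_one]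
  have h52 : (1 + β) ^ ((5 : ℝ) / 2) = √(1 + β) * (1 + β) ^ 2 := by
    rw [show (5 : ℝ) / 2 = 1 / 2 + (2 : ℕ) by norm_num, rpow_add hβ, rpow_natCast, sqrt_eq_rpow]
  rw [Lfactor, hsqrt, hσβ, h52]
  field_simp

/-- Second component of `ξ(μ,σ)`: the integral of `u₂ · f^{1+β}` over `(0,∞)`. -/
theorem xi_second_component (μ σ β : ℝ) (hσ : 0 < σ) (hβ : 0 ≤ β) :
    ∫ x in Ioi (0 : ℝ), scoreU2 μ σ x * lognormalPdf μ σ x ^ (1 + β) =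
      β * (β * σ ^ 2 - β - 1) * Lfactor β μ σ := by
  have hβ' : 0 < 1 + β := by linarith
  set m := μ - β * σ ^ 2 / (1 + β)
  set v := (σ ^ 2 / (1 + β)).toNNReal
  have hv : (v : ℝ) = σ ^ 2 / (1 + β) := Real.coe_toNNReal _ (by positivity)
  have hv0 : v ≠ 0 := (Real.toNNReal_pos.mpr (by positivity)).ne'
  have hintegrand : ∀ t, exp t • (scoreU2 μ σ (exp t) * lognormalPdf μ σ (exp t) ^ (1 + β)) =
      σ * (1 + β) ^ 2 * Lfactor β μ σ / σ ^ 3 * (gaussianPDFReal m v t • ((t - μ) ^ 2 - σ ^ 2)) := by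
    intro t
    rw [smul_eq_mul, smul_eq_mul, mul_left_comm, exp_mul_lognormalPdf_exp_rpow μ hσ hβ',
      mul_Lfactor_eq μ hσ hβ', scoreU2, log_exp]
    ring
  have hsq : Integrable (fun t => (t - μ) ^ 2) (gaussianReal m v) :=
    ((memLp_id_gaussianReal 2).sub (memLp_const μ)).integrable_sq
  rw [integral_Ioi_zero_eq_integral_exp_smul_comp_exp, integral_congr_ae (ae_of_all _ hintegrand),
    integral_const_mul, ← integral_gaussianReal_eq_integral_smul hv0,
    integral_sub hsq (integrable_const _), integral_sub_sq_gaussianReal, integral_const,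
    probReal_univ, one_smul, hv]
  simp only [m]
  field_simp
  ring
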